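/- arXiv:2411.14342 — 2 statements merged into one kernel-verified Lean document; each statement's English description precedes it below -/
import Mathlib

section
/- Let f : ℝ^d → ℝ be ρ-weakly convex and 0 < μ < 1/ρ, and let x*(z) denote the unique minimizer of x ↦ f(x) + (1/(2μ))‖x − z‖². Then the proximal map is (1 − μρ)^{-1}-Lipschitz: ‖x*(z) − x*(z')‖ ≤ (1 − μρ)^{-1} ‖z − z'‖ for all z, z'. -/
/-!
Adding `(1/(2μ))‖x - z‖²` to a `ρ`-weakly convex `f` gives a `(1/μ - ρ)`-strongly convex
function, so it grows at least like `(1/μ - ρ)/2 · ‖x - x*(z)‖²` away from its minimizer.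
Writing this growth bound for `z` at `x*(z')` and for `z'` at `x*(z)` and adding, the values of
`f` cancel and the quadratic terms in `z, z'` collapse to `(1/μ)⟪x*(z) - x*(z'), z - z'⟫`;
Cauchy–Schwarz then gives `(1/μ - ρ)‖x*(z) - x*(z')‖ ≤ (1/μ)‖z - z'‖`.
-/

open RealInnerProductSpace Filter Topology Set

section NormedSpace

variable {E : Type*} [NormedAddCommGroup E] [NormedSpace ℝ E] {s : Set E} {m : ℝ} {f : E → ℝ}

theorem StrongConvexOn.add_sq_norm_sub_le_of_isMinOn (hf : StrongConvexOn s m f) {u : E}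
    (hu : IsMinOn f s u) (hus : u ∈ s) {x : E} (hx : x ∈ s) :
    f u + m / 2 * ‖x - u‖ ^ 2 ≤ f x := by
  have hsegment : ∀ t ∈ Ioo (0 : ℝ) 1, (1 - t) * (m / 2 * ‖x - u‖ ^ 2) ≤ f x - f u := by
    rintro t ⟨ht0, ht1⟩
    have hconv := hf.2 hx hus ht0.le (sub_nonneg.mpr ht1.le) (add_sub_cancel t 1)
    have hmin : f u ≤ f (t • x + (1 - t) • u) :=
      hu (hf.1 hx hus ht0.le (sub_nonneg.mpr ht1.le) (add_sub_cancel t 1))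
    simp only [smul_eq_mul] at hconv
    refine le_of_mul_le_mul_left ?_ ht0
    linarith
  have hlim : Tendsto (fun t : ℝ => (1 - t) * (m / 2 * ‖x - u‖ ^ 2)) (𝓝[>] 0)
      (𝓝 (m / 2 * ‖x - u‖ ^ 2)) := by
    have : Continuous fun t : ℝ => (1 - t) * (m / 2 * ‖x - u‖ ^ 2) := by fun_prop
    simpa using (this.tendsto 0).mono_left nhdsWithin_le_nhds
  have hA := le_of_tendsto hlim (mem_of_superset (Ioo_mem_nhdsGT one_pos) hsegment)
  linarith

end NormedSpace

section InnerProductSpace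

variable {E : Type*} [NormedAddCommGroup E] [InnerProductSpace ℝ E] {s : Set E} {f : E → ℝ}

theorem ConvexOn.strongConvexOn_add_mul_sq_norm_sub {ρ : ℝ}
    (hf : ConvexOn ℝ s fun x => f x + ρ / 2 * ‖x‖ ^ 2) (c : ℝ) (z : E) :
    StrongConvexOn s (2 * c - ρ) fun x => f x + c * ‖x - z‖ ^ 2 := by
  rw [strongConvexOn_iff_convex]
  have haffine : ConvexOn ℝ s fun x => -(2 * c) • innerₛₗ ℝ z x + c * ‖z‖ ^ 2 :=
    ((-(2 * c)) • innerₛₗ ℝ z).convexOn hf.1 |>.add_const _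
  refine (hf.add haffine).congr fun x _ => ?_
  simp only [Pi.add_apply, innerₛₗ_apply_apply, smul_eq_mul, norm_sub_sq_real, real_inner_comm z x]
  ring

theorem mul_norm_sub_le_of_add_sq_norm_sub_le {c m : ℝ} (hc : 0 ≤ c) {u v z z' : E}
    (hu : f u + c * ‖u - z‖ ^ 2 + m / 2 * ‖v - u‖ ^ 2 ≤ f v + c * ‖v - z‖ ^ 2)
    (hv : f v + c * ‖v - z'‖ ^ 2 + m / 2 * ‖u - v‖ ^ 2 ≤ f u + c * ‖u - z'‖ ^ 2) :
    m * ‖u - v‖ ≤ 2 * c * ‖z - z'‖ := by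
  have hpolar : ‖v - z‖ ^ 2 - ‖u - z‖ ^ 2 + ‖u - z'‖ ^ 2 - ‖v - z'‖ ^ 2 = 2 * ⟪u - v, z - z'⟫ := by
    simp only [norm_sub_sq_real, inner_sub_left, inner_sub_right]
    ring
  have hsq : m * ‖u - v‖ ^ 2 ≤ 2 * c * (‖u - v‖ * ‖z - z'‖) := by
    rw [norm_sub_rev v u] at hu
    have hcs := mul_le_mul_of_nonneg_left (real_inner_le_norm (u - v) (z - z')) hc
    linear_combination hu + hv + c * hpolar + 2 * hcs
  rcases (norm_nonneg (u - v)).eq_or_lt with huv | huv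
  · rw [← huv, mul_zero]
    positivity
  · refine le_of_mul_le_mul_right ?_ huv
    linarith

end InnerProductSpace

theorem prox_map_lipschitz_general {d : ℕ}
    (f : EuclideanSpace ℝ (Fin d) → ℝ)
    (ρ : ℝ)
    (hwc : ConvexOn ℝ Set.univ (fun x => f x + (ρ / 2) * ‖x‖ ^ 2))
    (μ : ℝ) (hμ : 0 < μ) (hμρ : μ < 1 / ρ)
    (xstar : EuclideanSpace ℝ (Fin d) → EuclideanSpace ℝ (Fin d))
    (hxstar : ∀ z x, f (xstar z) + (1 / (2 * μ)) * ‖xstar z - z‖ ^ 2 ≤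
        f x + (1 / (2 * μ)) * ‖x - z‖ ^ 2) :
    ∀ z z', ‖xstar z - xstar z'‖ ≤ (1 - μ * ρ)⁻¹ * ‖z - z'‖ := by
  intro z z'
  have hρ : 0 < ρ := one_div_pos.mp (hμ.trans hμρ)
  have hμρ_lt_one : 0 < 1 - μ * ρ := sub_pos.mpr ((lt_div_iff₀ hρ).mp hμρ)
  have hgrowth (z x) := (hwc.strongConvexOn_add_mul_sq_norm_sub (1 / (2 * μ)) z)
    |>.add_sq_norm_sub_le_of_isMinOn (isMinOn_univ_iff.mpr (hxstar z)) (mem_univ _) (mem_univ x)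
  have hkey := mul_norm_sub_le_of_add_sq_norm_sub_le (by positivity)
    (hgrowth z (xstar z')) (hgrowth z' (xstar z))
  rw [inv_mul_eq_div, le_div_iff₀ hμρ_lt_one]
  calc ‖xstar z - xstar z'‖ * (1 - μ * ρ)
      = μ * ((2 * (1 / (2 * μ)) - ρ) * ‖xstar z - xstar z'‖) := by field_simp
    _ ≤ μ * (2 * (1 / (2 * μ)) * ‖z - z'‖) := by gcongr
    _ = ‖z - z'‖ := by field_simp

/-- The proximal map of a ρ-weakly convex function is (1−μρ)⁻¹-Lipschitz. -/
theorem prox_map_lipschitz {d : ℕ}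
    (f : EuclideanSpace ℝ (Fin d) → ℝ)
    (ρ : ℝ) (hρ : 0 < ρ)
    (hwc : ConvexOn ℝ Set.univ (fun x => f x + (ρ / 2) * ‖x‖ ^ 2))
    (μ : ℝ) (hμ : 0 < μ) (hμρ : μ < 1 / ρ)
    (xstar : EuclideanSpace ℝ (Fin d) → EuclideanSpace ℝ (Fin d))
    (hxstar : ∀ z x, f (xstar z) + (1 / (2 * μ)) * ‖xstar z - z‖ ^ 2 ≤
        f x + (1 / (2 * μ)) * ‖x - z‖ ^ 2) :
    ∀ z z', ‖xstar z - xstar z'‖ ≤ (1 - μ * ρ)⁻¹ * ‖z - z'‖ :=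
  prox_map_lipschitz_general f ρ hwc μ hμ hμρ xstar hxstar
end

section
/- Let f₁, f₂ : ℝ^d → ℝ be ρ-weakly convex, 0 < μ < 1/ρ, and define f_μ(z) := f_{2,μ}(z) − f_{1,μ}(z) where f_{i,μ} is the Moreau envelope of f_i. Then ∇f_μ(z) = (x₁*(z) − x₂*(z))/μ, where x_i*(z) is the proximal point of f_i at z, and ∇f_μ is Lipschitz continuous with constant 2/(μ − μ²ρ). -/
/-!
For `μρ < 1` the objective `x ↦ f x + ‖x - z‖² / (2μ)` is `(1/μ - ρ)`-strongly convex, so it grows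
quadratically away from its minimiser `x*(z)`. Adding this growth inequality at `z` and at `z'`
shows that `x*` is `(1 - μρ)⁻¹`-Lipschitz. Evaluating the objective at `z'` in `x*(z)`, and at `z`
in `x*(z')`, squeezes the first-order remainder of the envelope at `z` with slope
`(z - x*(z)) / μ` between multiples of `±‖z' - z‖²`, using the Lipschitz bound for the lower side.
Subtracting the two envelopes gives the gradient `(x₁*(z) - x₂*(z)) / μ`, Lipschitz with constant
`2 / (μ (1 - μρ))`.
-/

open RealInnerProductSpace Set Filter Topology

section StrongConvexity

variable {E : Type*} [NormedAddCommGroup E] [NormedSpace ℝ E]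

theorem StrongConvexOn.add_sq_le_of_isMinOn {s : Set E} {m : ℝ} {f : E → ℝ} {a y : E}
    (hf : StrongConvexOn s m f) (hmin : IsMinOn f s a) (ha : a ∈ s) (hy : y ∈ s) :
    f a + m / 2 * ‖y - a‖ ^ 2 ≤ f y := by
  have hsegment : ∀ t ∈ Ioo (0 : ℝ) 1, f a + (1 - t) * (m / 2 * ‖y - a‖ ^ 2) ≤ f y := by
    rintro t ⟨ht₀, ht₁⟩
    have hconv := hf.2 hy ha ht₀.le (sub_nonneg.2 ht₁.le) (add_sub_cancel t 1)
    have hmin_t : f a ≤ f (t • y + (1 - t) • a) :=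
      hmin (hf.1 hy ha ht₀.le (sub_nonneg.2 ht₁.le) (add_sub_cancel t 1))
    simp only [smul_eq_mul] at hconv
    have : t * (f a + (1 - t) * (m / 2 * ‖y - a‖ ^ 2)) ≤ t * f y := by linarith
    exact le_of_mul_le_mul_left this ht₀
  have hlim : Tendsto (fun t : ℝ => f a + (1 - t) * (m / 2 * ‖y - a‖ ^ 2)) (𝓝[>] 0)
      (𝓝 (f a + m / 2 * ‖y - a‖ ^ 2)) := by
    refine tendsto_nhdsWithin_of_tendsto_nhds (Continuous.tendsto' (by fun_prop) _ _ ?_)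
    ring
  exact le_of_tendsto hlim (mem_of_superset (Ioo_mem_nhdsGT one_pos) hsegment)

end StrongConvexity

section MoreauEnvelope

variable {E : Type*} [NormedAddCommGroup E] [InnerProductSpace ℝ E]

theorem norm_le_of_sq_le_inner {c : ℝ} {w v : E} (hc : 0 ≤ c) (h : ‖w‖ ^ 2 ≤ c * ⟪w, v⟫) :
    ‖w‖ ≤ c * ‖v‖ := by
  have hcs : ‖w‖ * ‖w‖ ≤ ‖w‖ * (c * ‖v‖) :=
    calc ‖w‖ * ‖w‖ = ‖w‖ ^ 2 := (sq _).symm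
      _ ≤ c * ⟪w, v⟫ := h
      _ ≤ c * (‖w‖ * ‖v‖) := by gcongr; exact real_inner_le_norm w v
      _ = ‖w‖ * (c * ‖v‖) := by ring
  rcases (norm_nonneg w).eq_or_lt with hw | hw
  · rw [← hw]; positivity
  · exact le_of_mul_le_mul_left hcs hw

noncomputable def moreauObjective (f : E → ℝ) (μ : ℝ) (z x : E) : ℝ :=
  f x + 1 / (2 * μ) * ‖x - z‖ ^ 2

theorem moreauObjective_eq_add_inner (f : E → ℝ) (μ : ℝ) (z z' x : E) :
    moreauObjective f μ z' x =
      moreauObjective f μ z x + 1 / μ * ⟪z - x, z' - z⟫ + 1 / (2 * μ) * ‖z' - z‖ ^ 2 := by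
  have hsplit : x - z' = (x - z) - (z' - z) := by abel
  rw [moreauObjective, moreauObjective, hsplit, norm_sub_sq_real, ← neg_sub z x, inner_neg_left]
  ring

theorem strongConvexOn_moreauObjective {s : Set E} {f : E → ℝ} {ρ : ℝ} (μ : ℝ)
    (hf : ConvexOn ℝ s fun x => f x + ρ / 2 * ‖x‖ ^ 2) (z : E) :
    StrongConvexOn s (1 / μ - ρ) (moreauObjective f μ z) := by
  rw [strongConvexOn_iff_convex]
  have haffine : ConvexOn ℝ s fun x => -(1 / μ) * ⟪z, x⟫ + 1 / (2 * μ) * ‖z‖ ^ 2 :=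
    ((-(1 / μ) • (innerSL ℝ z).toLinearMap).convexOn hf.1).add_const _
  refine (hf.add haffine).congr fun x _ => ?_
  simp only [Pi.add_apply, moreauObjective, norm_sub_sq_real, real_inner_comm x z]
  ring

theorem norm_sub_le_of_isMinOn_moreauObjective {f : E → ℝ} {ρ μ : ℝ} {xstar : E → E}
    (hμ : 0 < μ) (hμρ : μ * ρ < 1) (hf : ConvexOn ℝ univ fun x => f x + ρ / 2 * ‖x‖ ^ 2)
    (hmin : ∀ z, IsMinOn (moreauObjective f μ z) univ (xstar z)) (z z' : E) :
    ‖xstar z - xstar z'‖ ≤ (1 - μ * ρ)⁻¹ * ‖z - z'‖ := by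
  have hgrowth (z y : E) := (strongConvexOn_moreauObjective μ hf z).add_sq_le_of_isMinOn
    (hmin z) (mem_univ _) (mem_univ y)
  have h₁ := hgrowth z (xstar z')
  have h₂ := hgrowth z' (xstar z)
  rw [moreauObjective_eq_add_inner f μ z' z (xstar z'), norm_sub_rev z,
    norm_sub_rev (xstar z')] at h₁
  rw [moreauObjective_eq_add_inner f μ z z' (xstar z)] at h₂
  have hinner : ⟪z' - xstar z', z - z'⟫ + ⟪z - xstar z, z' - z⟫ + ‖z' - z‖ ^ 2 =
      ⟪xstar z - xstar z', z - z'⟫ := by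
    rw [← real_inner_self_eq_norm_sq]
    simp only [inner_sub_left, inner_sub_right, real_inner_comm z z']
    ring
  have hmono : (1 / μ - ρ) * ‖xstar z - xstar z'‖ ^ 2 ≤ 1 / μ * ⟪xstar z - xstar z', z - z'⟫ := by
    linear_combination h₁ + h₂ + 1 / μ * hinner
  have hgap : 0 < 1 - μ * ρ := by linarith
  refine norm_le_of_sq_le_inner (inv_nonneg.2 hgap.le) ?_
  rw [le_inv_mul_iff₀ hgap]
  calc (1 - μ * ρ) * ‖xstar z - xstar z'‖ ^ 2
      = μ * ((1 / μ - ρ) * ‖xstar z - xstar z'‖ ^ 2) := by field_simp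
    _ ≤ μ * (1 / μ * ⟪xstar z - xstar z', z - z'⟫) := by gcongr
    _ = ⟪xstar z - xstar z', z - z'⟫ := by field_simp

theorem HasGradientAt.sub [CompleteSpace E] {φ ψ : E → ℝ} {g h z : E} (hφ : HasGradientAt φ g z)
    (hψ : HasGradientAt ψ h z) : HasGradientAt (fun x => φ x - ψ x) (g - h) z := by
  rw [hasGradientAt_iff_hasFDerivAt, map_sub]
  exact hφ.hasFDerivAt.sub hψ.hasFDerivAt

theorem hasGradientAt_of_abs_sub_inner_le [CompleteSpace E] {φ : E → ℝ} {g z : E} {K : ℝ}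
    (h : ∀ z', |φ z' - φ z - ⟪g, z' - z⟫| ≤ K * ‖z' - z‖ ^ 2) : HasGradientAt φ g z := by
  refine hasGradientAt_iff_isLittleO.2 <|
    (Asymptotics.IsBigO.of_bound K (Eventually.of_forall fun z' => ?_)).trans_isLittleO
      (Asymptotics.isLittleO_pow_sub_sub z one_lt_two)
  simpa only [Real.norm_eq_abs, norm_pow, abs_norm] using h z'

theorem hasGradientAt_moreauEnvelope [CompleteSpace E] {f : E → ℝ} {μ L : ℝ} {xstar : E → E}
    {z : E} (hμ : 0 < μ) (hmin : ∀ z, IsMinOn (moreauObjective f μ z) univ (xstar z))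
    (hlip : ∀ z', ‖xstar z' - xstar z‖ ≤ L * ‖z' - z‖) :
    HasGradientAt (fun z => moreauObjective f μ z (xstar z)) ((1 / μ) • (z - xstar z)) z := by
  refine hasGradientAt_of_abs_sub_inner_le (K := (1 / 2 + |L|) / μ) fun z' => ?_
  have hupper : moreauObjective f μ z' (xstar z') ≤ moreauObjective f μ z' (xstar z) :=
    hmin z' (mem_univ _)
  have hlower : moreauObjective f μ z (xstar z) ≤ moreauObjective f μ z (xstar z') :=
    hmin z (mem_univ _)
  rw [moreauObjective_eq_add_inner f μ z z' (xstar z)] at hupper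
  rw [moreauObjective_eq_add_inner f μ z' z (xstar z'), norm_sub_rev z] at hlower
  have hprox : ⟪xstar z' - xstar z, z' - z⟫ ≤ |L| * ‖z' - z‖ ^ 2 :=
    calc ⟪xstar z' - xstar z, z' - z⟫ ≤ ‖xstar z' - xstar z‖ * ‖z' - z‖ := real_inner_le_norm _ _
      _ ≤ |L| * ‖z' - z‖ * ‖z' - z‖ := by
          gcongr
          exact (hlip z').trans (by gcongr; exact le_abs_self L)
      _ = |L| * ‖z' - z‖ ^ 2 := by ring
  have hinner : ⟪z' - xstar z', z - z'⟫ + ⟪z - xstar z, z' - z⟫ =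
      ⟪xstar z' - xstar z, z' - z⟫ - ‖z' - z‖ ^ 2 := by
    rw [← real_inner_self_eq_norm_sq]
    simp only [inner_sub_left, inner_sub_right, real_inner_comm z z']
    ring
  have hsq : 0 ≤ 1 / μ * ‖z' - z‖ ^ 2 := by positivity
  have hLsq : 0 ≤ 1 / μ * (|L| * ‖z' - z‖ ^ 2) := by positivity
  rw [real_inner_smul_left, abs_le]
  constructor
  · linear_combination hlower + 1 / μ * hinner + 1 / μ * hprox + hsq
  · linear_combination hupper + hLsq

end MoreauEnvelope

/-- Gradient and smoothness of the difference of two Moreau envelopes. -/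
theorem dc_envelope_gradient {d : ℕ}
    (f₁ f₂ : EuclideanSpace ℝ (Fin d) → ℝ)
    (ρ : ℝ) (hρ : 0 < ρ)
    (hwc₁ : ConvexOn ℝ Set.univ (fun x => f₁ x + (ρ / 2) * ‖x‖ ^ 2))
    (hwc₂ : ConvexOn ℝ Set.univ (fun x => f₂ x + (ρ / 2) * ‖x‖ ^ 2))
    (μ : ℝ) (hμ : 0 < μ) (hμρ : μ < 1 / ρ)
    (x₁star x₂star : EuclideanSpace ℝ (Fin d) → EuclideanSpace ℝ (Fin d))
    (hx₁ : ∀ z x, f₁ (x₁star z) + (1 / (2 * μ)) * ‖x₁star z - z‖ ^ 2 ≤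
        f₁ x + (1 / (2 * μ)) * ‖x - z‖ ^ 2)
    (hx₂ : ∀ z x, f₂ (x₂star z) + (1 / (2 * μ)) * ‖x₂star z - z‖ ^ 2 ≤
        f₂ x + (1 / (2 * μ)) * ‖x - z‖ ^ 2) :
    (∀ z, HasGradientAt
        (fun z => (f₂ (x₂star z) + (1 / (2 * μ)) * ‖x₂star z - z‖ ^ 2) -
          (f₁ (x₁star z) + (1 / (2 * μ)) * ‖x₁star z - z‖ ^ 2))
        ((1 / μ) • (x₁star z - x₂star z)) z) ∧
      (∀ z z', ‖(1 / μ) • (x₁star z - x₂star z) - (1 / μ) • (x₁star z' - x₂star z')‖ ≤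
        (2 / (μ - μ ^ 2 * ρ)) * ‖z - z'‖) := by
  have hμρ' : μ * ρ < 1 := (lt_div_iff₀ hρ).mp hμρ
  have hmin₁ z : IsMinOn (moreauObjective f₁ μ z) univ (x₁star z) := isMinOn_univ_iff.2 (hx₁ z)
  have hmin₂ z : IsMinOn (moreauObjective f₂ μ z) univ (x₂star z) := isMinOn_univ_iff.2 (hx₂ z)
  have hlip₁ := norm_sub_le_of_isMinOn_moreauObjective hμ hμρ' hwc₁ hmin₁
  have hlip₂ := norm_sub_le_of_isMinOn_moreauObjective hμ hμρ' hwc₂ hmin₂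
  refine ⟨fun z => ?_, fun z z' => ?_⟩
  · rw [show (1 / μ) • (x₁star z - x₂star z) = (1 / μ) • (z - x₂star z) - (1 / μ) • (z - x₁star z)
      by module]
    exact (hasGradientAt_moreauEnvelope hμ hmin₂ (hlip₂ · z)).sub
      (hasGradientAt_moreauEnvelope hμ hmin₁ (hlip₁ · z))
  · calc ‖(1 / μ) • (x₁star z - x₂star z) - (1 / μ) • (x₁star z' - x₂star z')‖
        = 1 / μ * ‖(x₁star z - x₁star z') - (x₂star z - x₂star z')‖ := by
          rw [← smul_sub, norm_smul, Real.norm_of_nonneg (by positivity)]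
          congr 2
          abel
      _ ≤ 1 / μ * ((1 - μ * ρ)⁻¹ * ‖z - z'‖ + (1 - μ * ρ)⁻¹ * ‖z - z'‖) := by
          gcongr
          exact (norm_sub_le _ _).trans (add_le_add (hlip₁ z z') (hlip₂ z z'))
      _ = 2 / (μ - μ ^ 2 * ρ) * ‖z - z'‖ := by
          field_simp
          ring
end
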